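/- arXiv:2309.04181 — 4 statements merged into one kernel-verified Lean document; each statement's English description precedes it below -/
import Mathlib

section
/- If a matching M dominates a stable π-schedule matching t, then M is a stable matching. -/
open Finset
open scoped Classical

noncomputable section

variable {F W X : Type} [Fintype F] [Fintype W] [Fintype X]
  [DecidableEq F] [DecidableEq W] [DecidableEq X]

/-- The contracts of worker `w` in the set `Y`. -/
def restrW (xW : X → W) (Y : Finset X) (w : W) : Finset X := Y.filter fun x => xW x = w

/-- The contracts of firm `f` in the set `Y`. -/
def restrF (xF : X → F) (Y : Finset X) (f : F) : Finset X := Y.filter fun x => xF x = f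

/-- `Y` is an assignment of firm `f`: all its contracts are `f`'s, at most one per worker. -/
def IsAssignment (xF : X → F) (xW : X → W) (f : F) (Y : Finset X) : Prop :=
  (∀ x ∈ Y, xF x = f) ∧ ∀ w, (restrW xW Y w).card ≤ 1

/-- `Y` is an acceptable assignment of firm `f`. -/
def AccA (xF : X → F) (xW : X → W) (uF : F → Finset X → ℝ) (f : F) (Y : Finset X) : Prop :=
  IsAssignment xF xW f Y ∧ uF f Y > uF f ∅

/-- `Y` is an acceptable assignment of some firm (`Y ∈ 𝒜̄^F`). -/
def AccF (xF : X → F) (xW : X → W) (uF : F → Finset X → ℝ) (Y : Finset X) : Prop :=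
  ∃ f, AccA xF xW uF f Y

/-- Worker `w`'s strict order `▷_w` over situations, with the artificial externalities:
`Y ▷_w Z` iff `Y_w ≻_w Z_w`, or `Y_w = Z_w` and the (common) employer prefers `Y` to `Z`. -/
def wB (xF : X → F) (xW : X → W) (uF : F → Finset X → ℝ) (uW : W → Finset X → ℝ)
    (w : W) (Y Z : Finset X) : Prop :=
  uW w (restrW xW Y w) > uW w (restrW xW Z w) ∨
    (restrW xW Y w = restrW xW Z w ∧ ∃ x ∈ Y, xW x = w ∧ uF (xF x) Y > uF (xF x) Z)

def wGe (xF : X → F) (xW : X → W) (uF : F → Finset X → ℝ) (uW : W → Finset X → ℝ)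
    (w : W) (Y Z : Finset X) : Prop :=
  wB xF xW uF uW w Y Z ∨ Y = Z

/-- A π scheme: intensities `π_Y` (split into firm and worker components) and
capacities `π_N` (`capF`, `capW`). -/
structure Scheme (F W X : Type) where
  piF : Finset X → F → ℝ
  piW : Finset X → W → ℝ
  capF : F → ℝ
  capW : W → ℝ

/-- Validity of a π scheme: capacities positive, intensities nonnegative and positive
exactly on the agents `N(Y)` involved in each acceptable assignment `Y`. -/
def Scheme.Valid (π : Scheme F W X) (xF : X → F) (xW : X → W)
    (uF : F → Finset X → ℝ) : Prop :=
  (∀ f, 0 < π.capF f) ∧ (∀ w, 0 < π.capW w) ∧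
  (∀ Y f, 0 ≤ π.piF Y f) ∧ (∀ Y w, 0 ≤ π.piW Y w) ∧
  (∀ Y, AccF xF xW uF Y → ∀ f, ((restrF xF Y f).Nonempty ↔ 0 < π.piF Y f)) ∧
  (∀ Y, AccF xF xW uF Y → ∀ w, ((restrW xW Y w).Nonempty ↔ 0 < π.piW Y w))

/-- `t` is a π-schedule matching: nonnegative time shares supported on acceptable
assignments, with each agent's total input within its capacity. -/
def IsSchedC (xF : X → F) (xW : X → W) (uF : F → Finset X → ℝ)
    (π : Scheme F W X) (t : Finset X → ℝ) : Prop :=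
  (∀ Y, 0 ≤ t Y) ∧ (∀ Y, 0 < t Y → AccF xF xW uF Y) ∧
  (∀ f, ∑ Y : Finset X, t Y * π.piF Y f ≤ π.capF f) ∧
  (∀ w, ∑ Y : Finset X, t Y * π.piW Y w ≤ π.capW w)

/-- `Y0 = t̃(f)`: firm `f`'s worst situation in the π-schedule matching `t`. -/
def WorstFC (xF : X → F) (xW : X → W) (uF : F → Finset X → ℝ)
    (π : Scheme F W X) (t : Finset X → ℝ) (f : F) (Y0 : Finset X) : Prop :=
  ((∑ Y : Finset X, t Y * π.piF Y f) = π.capF f ∧ 0 < t Y0 ∧ AccA xF xW uF f Y0 ∧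
    ∀ Y, 0 < t Y → AccA xF xW uF f Y → uF f Y0 ≤ uF f Y) ∨
  ((∑ Y : Finset X, t Y * π.piF Y f) ≠ π.capF f ∧ Y0 = ∅)

/-- `Y0 = t̃(w)`: worker `w`'s worst situation (under `▷_w`) in `t`. -/
def WorstWC (xF : X → F) (xW : X → W) (uF : F → Finset X → ℝ) (uW : W → Finset X → ℝ)
    (π : Scheme F W X) (t : Finset X → ℝ) (w : W) (Y0 : Finset X) : Prop :=
  ((∑ Y : Finset X, t Y * π.piW Y w) = π.capW w ∧ 0 < t Y0 ∧ (restrW xW Y0 w).Nonempty ∧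
    ∀ Y, 0 < t Y → (restrW xW Y w).Nonempty → wGe xF xW uF uW w Y Y0) ∨
  ((∑ Y : Finset X, t Y * π.piW Y w) ≠ π.capW w ∧ Y0 = ∅)

/-- An assignment `Z ∈ 𝒜̄^f` blocks the π-schedule matching `t`; `t` is stable if
it cannot be blocked. -/
def SchedStable (xF : X → F) (xW : X → W) (uF : F → Finset X → ℝ) (uW : W → Finset X → ℝ)
    (π : Scheme F W X) (t : Finset X → ℝ) : Prop :=
  ¬∃ f Z, AccA xF xW uF f Z ∧
    (∀ Y0, WorstFC xF xW uF π t f Y0 → uF f Z > uF f Y0) ∧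
    ∀ w, (restrW xW Z w).Nonempty → ∀ Y0, WorstWC xF xW uF uW π t w Y0 →
      wB xF xW uF uW w Z Y0

/-- A matching: a set of contracts with at most one contract per worker. -/
def IsMatchingX (xW : X → W) (M : Finset X) : Prop :=
  ∀ w, (restrW xW M w).card ≤ 1

/-- Worker `w`'s situation in the matching `M`: her employer's full assignment in `M`,
or `∅` if she is unmatched. -/
def situX (xF : X → F) (xW : X → W) (M : Finset X) (w : W) : Finset X :=
  M.filter fun x => ∃ y ∈ M, xW y = w ∧ xF y = xF x

/-- An assignment `Z` of firm `f` blocks the matching `M`. -/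
def MBlocks (xF : X → F) (xW : X → W) (uF : F → Finset X → ℝ) (uW : W → Finset X → ℝ)
    (M : Finset X) (f : F) (Z : Finset X) : Prop :=
  IsAssignment xF xW f Z ∧ uF f Z > uF f (restrF xF M f) ∧
    ∀ w, (restrW xW Z w).Nonempty → uW w (restrW xW Z w) ≥ uW w (restrW xW M w)

/-- Stability of a (full-time) matching. -/
def MStable (xF : X → F) (xW : X → W) (uF : F → Finset X → ℝ) (uW : W → Finset X → ℝ)
    (M : Finset X) : Prop :=
  IsMatchingX xW M ∧ ¬∃ f Z, MBlocks xF xW uF uW M f Z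

/-- The matching `M` dominates the π-schedule matching `t`. -/
def DominatesC (xF : X → F) (xW : X → W) (uF : F → Finset X → ℝ) (uW : W → Finset X → ℝ)
    (π : Scheme F W X) (t : Finset X → ℝ) (M : Finset X) : Prop :=
  IsMatchingX xW M ∧
  (∀ f Y0, WorstFC xF xW uF π t f Y0 → uF f (restrF xF M f) ≥ uF f Y0) ∧
  (∀ w Y0, WorstWC xF xW uF uW π t w Y0 → wGe xF xW uF uW w (situX xF xW M w) Y0)

/-- Strict preferences of firms over assignments and of workers over their possible
assignments (with every contract acceptable to its worker). -/
def StrictPrefs (xF : X → F) (xW : X → W) (uF : F → Finset X → ℝ)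
    (uW : W → Finset X → ℝ) : Prop :=
  (∀ f Y Z, IsAssignment xF xW f Y → IsAssignment xF xW f Z → Y ≠ Z → uF f Y ≠ uF f Z) ∧
  (∀ w (Y Z : Finset X), (∀ x ∈ Y, xW x = w) → (∀ x ∈ Z, xW x = w) →
    Y.card ≤ 1 → Z.card ≤ 1 → Y ≠ Z → uW w Y ≠ uW w Z) ∧
  (∀ w x, xW x = w → uW w {x} > uW w (∅ : Finset X))

set_option linter.unusedSectionVars false in
lemma restrW_situ (xF : X → F) (xW : X → W) (M : Finset X) (w : W) :
    restrW xW (situX xF xW M w) w = restrW xW M w := by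
  ext x
  simp only [restrW, situX, mem_filter]
  constructor
  · rintro ⟨⟨hM, _⟩, hw⟩; exact ⟨hM, hw⟩
  · rintro ⟨hM, hw⟩; exact ⟨⟨hM, x, hM, hw, rfl⟩, hw⟩

set_option linter.unusedSectionVars false in
lemma situ_eq (xF : X → F) (xW : X → W) (M : Finset X) (w : W) (x : X)
    (hM : IsMatchingX xW M) (hx : x ∈ M) (hw : xW x = w) :
    situX xF xW M w = restrF xF M (xF x) := by
  ext z
  simp only [situX, restrF, mem_filter]
  constructor
  · rintro ⟨hz, y, hy, hyw, hyf⟩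
    refine ⟨hz, ?_⟩
    have h1 : y ∈ restrW xW M w := by simp [restrW, hy, hyw]
    have h2 : x ∈ restrW xW M w := by simp [restrW, hx, hw]
    have hyx : y = x := Finset.card_le_one.mp (hM w) y h1 x h2
    rw [← hyf, hyx]
  · rintro ⟨hz, hzf⟩
    exact ⟨hz, x, hx, hw, hzf.symm⟩

/-- If a matching `M` dominates a stable π-schedule matching `t`, then `M` is stable. -/
theorem stmt3 (xF : X → F) (xW : X → W) (uF : F → Finset X → ℝ) (uW : W → Finset X → ℝ)
    (hstrict : StrictPrefs xF xW uF uW)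
    (π : Scheme F W X) (hπ : π.Valid xF xW uF)
    (t : Finset X → ℝ) (ht : IsSchedC xF xW uF π t)
    (hts : SchedStable xF xW uF uW π t)
    (M : Finset X) (hdom : DominatesC xF xW uF uW π t M) :
    MStable xF xW uF uW M := by
  obtain ⟨hMmatch, hdomF, hdomW⟩ := hdom
  refine ⟨hMmatch, ?_⟩
  rintro ⟨f, Z, hZass, hZgt, hZW⟩
  obtain ⟨htnn, htacc, htF, htWc⟩ := ht
  obtain ⟨hcapF, hcapW, hpiFnn, hpiWnn, hvF, hvW⟩ := hπ
  obtain ⟨hsF, hsW, hsAcc⟩ := hstrict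
  -- Step 1: the firm's payoff in M is at least the empty payoff
  have hMfge : uF f (restrF xF M f) ≥ uF f (∅ : Finset X) := by
    by_cases hsum : (∑ Y : Finset X, t Y * π.piF Y f) = π.capF f
    · have hex : ∃ Y, 0 < t Y ∧ AccA xF xW uF f Y := by
        by_contra hno
        push_neg at hno
        have hz : (∑ Y : Finset X, t Y * π.piF Y f) = 0 := by
          apply Finset.sum_eq_zero
          intro Y _
          by_cases h0 : 0 < t Y
          · obtain ⟨f', hf'⟩ := htacc Y h0
            by_cases hpos : 0 < π.piF Y f
            · have hne := (hvF Y ⟨f', hf'⟩ f).mpr hpos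
              obtain ⟨x, hx⟩ := hne
              simp only [restrF, mem_filter] at hx
              have hff : f' = f := by rw [← hf'.1.1 x hx.1, hx.2]
              exact absurd (hff ▸ hf') (hno Y h0)
            · have : π.piF Y f = 0 := le_antisymm (not_lt.mp hpos) (hpiFnn Y f)
              rw [this, mul_zero]
          · have : t Y = 0 := le_antisymm (not_lt.mp h0) (htnn Y)
            rw [this, zero_mul]
        rw [hz] at hsum
        exact absurd hsum.symm (ne_of_gt (hcapF f))
      obtain ⟨Y1, hY1⟩ := hex
      have hY1S : Y1 ∈ Finset.univ.filter (fun Y => 0 < t Y ∧ AccA xF xW uF f Y) := by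
        simp [hY1.1, hY1.2]
      obtain ⟨Y0, hY0S, hY0min⟩ :=
        Finset.exists_min_image _ (uF f) ⟨Y1, hY1S⟩
      simp only [mem_filter, mem_univ, true_and] at hY0S
      have hWC : WorstFC xF xW uF π t f Y0 :=
        Or.inl ⟨hsum, hY0S.1, hY0S.2, fun Y hY hYa => hY0min Y (by simp [hY, hYa])⟩
      have h1 := hdomF f Y0 hWC
      have h2 : uF f Y0 > uF f ∅ := hY0S.2.2
      linarith
    · exact hdomF f ∅ (Or.inr ⟨hsum, rfl⟩)
  have hZacc : AccA xF xW uF f Z := ⟨hZass, by linarith⟩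
  apply hts
  refine ⟨f, Z, hZacc, ?_, ?_⟩
  · intro Y0 hY0
    exact lt_of_le_of_lt (hdomF f Y0 hY0) hZgt
  · intro w hw Y0 hY0
    have hZwcard1 : (restrW xW Z w).card = 1 :=
      le_antisymm (hZass.2 w) (Finset.card_pos.mpr hw)
    obtain ⟨x, hxZw⟩ := Finset.card_eq_one.mp hZwcard1
    have hxZ : x ∈ Z ∧ xW x = w := by
      have hx : x ∈ restrW xW Z w := by rw [hxZw]; exact mem_singleton_self x
      simpa [restrW] using hx
    have hxf : xF x = f := hZass.1 x hxZ.1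
    have hY0prop : Y0 = ∅ ∨ ∃ f', AccA xF xW uF f' Y0 := by
      rcases hY0 with ⟨_, hpos, _, _⟩ | ⟨_, h⟩
      · exact Or.inr (htacc Y0 hpos)
      · exact Or.inl h
    have hY0card : (restrW xW Y0 w).card ≤ 1 := by
      rcases hY0prop with h | ⟨f', hf'⟩
      · subst h; simp [restrW]
      · exact hf'.1.2 w
    have hZwge := hZW w hw
    have hdw := hdomW w Y0 hY0
    have hsitu := restrW_situ xF xW M w
    -- tie-breaking helper
    have hZmem : ∀ y ∈ restrW xW Z w, xW y = w := fun y hy => by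
      simpa [restrW] using (Finset.mem_filter.mp hy).2
    have hY0mem : ∀ y ∈ restrW xW Y0 w, xW y = w := fun y hy => by
      simpa [restrW] using (Finset.mem_filter.mp hy).2
    have tiecase : restrW xW M w = restrW xW Y0 w →
        (restrW xW Z w = restrW xW Y0 w → wB xF xW uF uW w Z Y0) →
        wB xF xW uF uW w Z Y0 := by
      intro h2 hk
      have hge : uW w (restrW xW Y0 w) ≤ uW w (restrW xW Z w) := by
        rw [← h2]; exact hZwge
      rcases lt_or_eq_of_le hge with hlt | heq
      · exact Or.inl hlt
      · refine hk ?_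
        by_contra hne
        exact hsW w (restrW xW Z w) (restrW xW Y0 w) hZmem hY0mem
          (hZass.2 w) hY0card hne heq.symm
    -- under the set tie, derive the key facts
    have keyfacts : restrW xW Z w = restrW xW Y0 w → restrW xW M w = restrW xW Y0 w →
        x ∈ Y0 ∧ x ∈ M ∧ situX xF xW M w = restrF xF M f := by
      intro hZY hMY
      have hxY0 : x ∈ restrW xW Y0 w := by rw [← hZY, hxZw]; exact mem_singleton_self x
      have hxY0' : x ∈ Y0 := by simpa [restrW] using (Finset.mem_filter.mp hxY0).1
      have hxM : x ∈ restrW xW M w := by rw [hMY]; exact hxY0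
      have hxM' : x ∈ M := by simpa [restrW] using (Finset.mem_filter.mp hxM).1
      have := situ_eq xF xW M w x hMmatch hxM' hxZ.2
      rw [hxf] at this
      exact ⟨hxY0', hxM', this⟩
    rcases hdw with hb | heqsitu
    · rcases hb with h1 | ⟨h2, x', hx'situ, hx'w, hx'u⟩
      · rw [hsitu] at h1
        exact Or.inl (lt_of_lt_of_le h1 hZwge)
      · rw [hsitu] at h2
        refine tiecase h2 (fun hZY => ?_)
        obtain ⟨hxY0', hxM', hsituM⟩ := keyfacts hZY h2
        -- x' = x
        have hx'M : x' ∈ M := by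
          have h := hx'situ
          simp only [situX, mem_filter] at h
          exact h.1
        have hx'rw : x' ∈ restrW xW M w := by simp [restrW, hx'M, hx'w]
        have hxrw : x ∈ restrW xW M w := by simp [restrW, hxM', hxZ.2]
        have hxx : x' = x := Finset.card_le_one.mp (hMmatch w) x' hx'rw x hxrw
        subst hxx
        rw [hxf, hsituM] at hx'u
        refine Or.inr ⟨hZY, x', hxZ.1, hxZ.2, ?_⟩
        rw [hxf]
        linarith
    · have h2 : restrW xW M w = restrW xW Y0 w := by rw [← hsitu, heqsitu]
      refine tiecase h2 (fun hZY => ?_)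
      obtain ⟨hxY0', hxM', hsituM⟩ := keyfacts hZY h2
      refine Or.inr ⟨hZY, x, hxZ.1, hxZ.2, ?_⟩
      rw [hxf, ← heqsitu, hsituM]
      exact hZgt
end
end

section
/- If firms' choice functions derived from the time-scheduling linear program are used, then in the case of schedule matching (canonical scheme), the vector t = (t(Y))_{Y ∈ 𝒜̄^F} obtained from any basic feasible solution b of {b ≥ 0, Ab = π_N} whose basis is also an ordinal basis of the utility matrix C is a stable π-schedule matching. -/
open Finset
open scoped Classical

noncomputable section

variable {F W X : Type} [Fintype F] [Fintype W] [Fintype X]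
  [DecidableEq F] [DecidableEq W] [DecidableEq X]

/-- The canonical scheme: `π_Y = ind(N(Y))`, `π_N = 1` (the schedule-matching case). -/
def Canonical (π : Scheme F W X) (xF : X → F) (xW : X → W) : Prop :=
  (∀ Y f, π.piF Y f = if (restrF xF Y f).Nonempty then 1 else 0) ∧
  (∀ Y w, π.piW Y w = if (restrW xW Y w).Nonempty then 1 else 0) ∧
  (∀ f, π.capF f = 1) ∧ (∀ w, π.capW w = 1)

/-- Agent `i` participates in the assignment `Y` (`i ∈ N(Y)`). -/
def Participates (xF : X → F) (xW : X → W) (i : F ⊕ W) (Y : Finset X) : Prop :=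
  Sum.elim (fun f => (restrF xF Y f).Nonempty) (fun w => (restrW xW Y w).Nonempty) i

/-- The matrix `A` of Scarf's construction: rows indexed by agents, columns by
agents (identity part) and acceptable assignments (`π_Y` part). -/
def Amat (xF : X → F) (xW : X → W) (uF : F → Finset X → ℝ) (π : Scheme F W X) :
    Matrix (F ⊕ W) ((F ⊕ W) ⊕ {Y : Finset X // AccF xF xW uF Y}) ℝ :=
  fun i j =>
    match j with
    | Sum.inl j' => if i = j' then 1 else 0
    | Sum.inr Y =>
      match i with
      | Sum.inl f => π.piF Y.1 f
      | Sum.inr w => π.piW Y.1 w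


lemma sum_dite_mul' {α : Type} [Fintype α] (p : α → Prop) [DecidablePred p]
    (f : {a // p a} → ℝ) (g : α → ℝ) :
    ∑ a : α, (if h : p a then f ⟨a, h⟩ else 0) * g a = ∑ a : {x // p x}, f a * g a.1 := by
  rw [← Finset.sum_filter_of_ne (p := p) (s := (Finset.univ : Finset α))
      (f := fun a => (if h : p a then f ⟨a, h⟩ else 0) * g a)
      (fun a _ hne => by by_contra hp; simp [dif_neg hp] at hne)]
  rw [Finset.sum_subtype (p := p) (Finset.univ.filter p) (fun x => by simp)
      (fun a => (if h : p a then f ⟨a, h⟩ else 0) * g a)]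
  exact Finset.sum_congr rfl fun a _ => by simp [a.2]

lemma wB_total' (xF : X → F) (xW : X → W) (uF : F → Finset X → ℝ) (uW : W → Finset X → ℝ)
    (hstrict : StrictPrefs xF xW uF uW) (w : W) (Y Z : Finset X)
    (hY : AccF xF xW uF Y) (hZ : AccF xF xW uF Z)
    (hYw : (restrW xW Y w).Nonempty)
    (hne : Y ≠ Z) : wB xF xW uF uW w Y Z ∨ wB xF xW uF uW w Z Y := by
  obtain ⟨fY, hfY⟩ := hY
  obtain ⟨fZ, hfZ⟩ := hZ
  by_cases hr : restrW xW Y w = restrW xW Z w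
  · obtain ⟨x, hx⟩ := hYw
    have hxY : x ∈ Y ∧ xW x = w := by simpa [restrW] using hx
    have hxZ : x ∈ Z := by
      have hx' : x ∈ restrW xW Z w := hr ▸ hx
      exact (Finset.mem_filter.1 hx').1
    have hfYx : fY = xF x := (hfY.1.1 x hxY.1).symm
    have hfZx : fZ = xF x := (hfZ.1.1 x hxZ).symm
    have hne' : uF (xF x) Y ≠ uF (xF x) Z :=
      hstrict.1 (xF x) Y Z (hfYx ▸ hfY.1) (hfZx ▸ hfZ.1) hne
    rcases lt_or_gt_of_ne hne' with h | h
    · exact Or.inr (Or.inr ⟨hr.symm, x, hxZ, hxY.2, h⟩)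
    · exact Or.inl (Or.inr ⟨hr, x, hxY.1, hxY.2, h⟩)
  · have h1 : ∀ x ∈ restrW xW Y w, xW x = w := fun x hx => (Finset.mem_filter.1 hx).2
    have h2 : ∀ x ∈ restrW xW Z w, xW x = w := fun x hx => (Finset.mem_filter.1 hx).2
    have := hstrict.2.1 w _ _ h1 h2 (hfY.1.2 w) (hfZ.1.2 w) hr
    rcases lt_or_gt_of_ne this with h | h
    · exact Or.inr (Or.inl h)
    · exact Or.inl (Or.inl h)

/-- In the schedule-matching (canonical-scheme) case, the time shares extracted from a
basic feasible solution of `{b ≥ 0, Ab = π_N}` whose basis is also an ordinal basis of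
the utility matrix `C` form a stable π-schedule matching. -/
theorem stmt12 (xF : X → F) (xW : X → W) (uF : F → Finset X → ℝ) (uW : W → Finset X → ℝ)
    (hstrict : StrictPrefs xF xW uF uW)
    (π : Scheme F W X) (hcanon : Canonical π xF xW)
    (C : Matrix (F ⊕ W) ((F ⊕ W) ⊕ {Y : Finset X // AccF xF xW uF Y}) ℝ)
    (hdiag : ∀ i, C i (Sum.inl i) = 0)
    (hposC : ∀ i j, j ≠ Sum.inl i → 0 < C i j)
    (hrow : ∀ i, Function.Injective (C i))
    (hCf : ∀ f (Y Z : {Y : Finset X // AccF xF xW uF Y}),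
      AccA xF xW uF f Y.1 → AccA xF xW uF f Z.1 → uF f Y.1 > uF f Z.1 →
      C (Sum.inl f) (Sum.inr Y) > C (Sum.inl f) (Sum.inr Z))
    (hCw : ∀ w (Y Z : {Y : Finset X // AccF xF xW uF Y}),
      (restrW xW Y.1 w).Nonempty → (restrW xW Z.1 w).Nonempty →
      wB xF xW uF uW w Y.1 Z.1 →
      C (Sum.inr w) (Sum.inr Y) > C (Sum.inr w) (Sum.inr Z))
    (hbig1 : ∀ i j, i ≠ j → ∀ i' (Y : {Y : Finset X // AccF xF xW uF Y}),
      C i (Sum.inl j) > C i' (Sum.inr Y))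
    (hbig2 : ∀ k (Y : {Y : Finset X // AccF xF xW uF Y}), ¬Participates xF xW k Y.1 →
      ∀ i (Y' : {Y : Finset X // AccF xF xW uF Y}), Participates xF xW i Y'.1 →
      C k (Sum.inr Y) > C i (Sum.inr Y'))
    (b : ((F ⊕ W) ⊕ {Y : Finset X // AccF xF xW uF Y}) → ℝ)
    (B : Finset ((F ⊕ W) ⊕ {Y : Finset X // AccF xF xW uF Y}))
    (hb0 : ∀ j, 0 ≤ b j)
    (hAb : ∀ i, ∑ j, Amat xF xW uF π i j * b j = Sum.elim π.capF π.capW i)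
    (hsupp : ∀ j, b j ≠ 0 → j ∈ B)
    (hcard : B.card = Fintype.card (F ⊕ W))
    (hLI : LinearIndependent ℝ
      (fun j : B => fun i => Amat xF xW uF π i (j : (F ⊕ W) ⊕ {Y : Finset X // AccF xF xW uF Y})))
    (hord : ∃ hB : B.Nonempty, ∀ s, ∃ i, B.inf' hB (fun j => C i j) ≥ C i s) :
    IsSchedC xF xW uF π (fun Y => if h : AccF xF xW uF Y then b (Sum.inr ⟨Y, h⟩) else 0) ∧
    SchedStable xF xW uF uW π
      (fun Y => if h : AccF xF xW uF Y then b (Sum.inr ⟨Y, h⟩) else 0) := by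
  obtain ⟨hcF, hcW, hcapF1, hcapW1⟩ := hcanon
  set t : Finset X → ℝ := fun Y => if h : AccF xF xW uF Y then b (Sum.inr ⟨Y, h⟩) else 0 with ht
  have htb : ∀ (Y : {Y : Finset X // AccF xF xW uF Y}), t Y.1 = b (Sum.inr Y) := by
    intro Y; simp [ht, Y.2]
  have ht0 : ∀ Y, 0 ≤ t Y := by
    intro Y; rw [ht]; dsimp only; split
    · exact hb0 _
    · exact le_rfl
  have htacc : ∀ Y, 0 < t Y → AccF xF xW uF Y := by
    intro Y h
    by_contra hc
    rw [ht] at h; simp [hc] at h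
  have hrowEq : ∀ i, b (Sum.inl i) +
      ∑ Y : {Y : Finset X // AccF xF xW uF Y},
        Amat xF xW uF π i (Sum.inr Y) * b (Sum.inr Y) = Sum.elim π.capF π.capW i := by
    intro i
    have h := hAb i
    rw [Fintype.sum_sum_type] at h
    have h1 : ∑ j' : F ⊕ W, Amat xF xW uF π i (Sum.inl j') * b (Sum.inl j')
        = b (Sum.inl i) := by
      simp [Amat, ite_mul]
    rw [h1] at h
    exact h
  have hTF : ∀ f, (∑ Y : Finset X, t Y * π.piF Y f)
      = ∑ Y : {Y : Finset X // AccF xF xW uF Y}, b (Sum.inr Y) * π.piF Y.1 f := by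
    intro f
    exact sum_dite_mul' (AccF xF xW uF) (fun Y => b (Sum.inr Y)) (fun Y => π.piF Y f)
  have hTW : ∀ w, (∑ Y : Finset X, t Y * π.piW Y w)
      = ∑ Y : {Y : Finset X // AccF xF xW uF Y}, b (Sum.inr Y) * π.piW Y.1 w := by
    intro w
    exact sum_dite_mul' (AccF xF xW uF) (fun Y => b (Sum.inr Y)) (fun Y => π.piW Y w)
  have hF : ∀ f, b (Sum.inl (Sum.inl f)) + (∑ Y : Finset X, t Y * π.piF Y f) = π.capF f := by
    intro f
    have h := hrowEq (Sum.inl f)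
    rw [hTF f]
    have e : ∑ Y : {Y : Finset X // AccF xF xW uF Y},
        Amat xF xW uF π (Sum.inl f) (Sum.inr Y) * b (Sum.inr Y)
        = ∑ Y : {Y : Finset X // AccF xF xW uF Y}, b (Sum.inr Y) * π.piF Y.1 f :=
      Finset.sum_congr rfl (fun Y _ => by simp [Amat, mul_comm])
    rw [e] at h
    simpa using h
  have hW : ∀ w, b (Sum.inl (Sum.inr w)) + (∑ Y : Finset X, t Y * π.piW Y w) = π.capW w := by
    intro w
    have h := hrowEq (Sum.inr w)
    rw [hTW w]
    have e : ∑ Y : {Y : Finset X // AccF xF xW uF Y},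
        Amat xF xW uF π (Sum.inr w) (Sum.inr Y) * b (Sum.inr Y)
        = ∑ Y : {Y : Finset X // AccF xF xW uF Y}, b (Sum.inr Y) * π.piW Y.1 w :=
      Finset.sum_congr rfl (fun Y _ => by simp [Amat, mul_comm])
    rw [e] at h
    simpa using h
  refine ⟨⟨ht0, htacc, fun f => ?_, fun w => ?_⟩, ?_⟩
  · linarith [hb0 (Sum.inl (Sum.inl f)), hF f]
  · linarith [hb0 (Sum.inl (Sum.inr w)), hW w]
  -- stability
  rintro ⟨f, Z, hZacc, hfb, hwb⟩
  obtain ⟨hB, hOB⟩ := hord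
  set sZ : {Y : Finset X // AccF xF xW uF Y} := ⟨Z, f, hZacc⟩ with hsZ
  obtain ⟨i, hi⟩ := hOB (Sum.inr sZ)
  have hAnn : ∀ i j, 0 ≤ Amat xF xW uF π i j := by
    intro i j
    cases j with
    | inl j' =>
      show (0:ℝ) ≤ if i = j' then 1 else 0
      split <;> norm_num
    | inr Y =>
      cases i with
      | inl f' =>
        show (0:ℝ) ≤ π.piF Y.1 f'
        rw [hcF]; split <;> norm_num
      | inr w =>
        show (0:ℝ) ≤ π.piW Y.1 w
        rw [hcW]; split <;> norm_num
  have key : ∃ j ∈ B, C i j < C i (Sum.inr sZ) := by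
    have hApos : ∃ j, b j ≠ 0 ∧ 0 < Amat xF xW uF π i j := by
      by_contra hc
      push_neg at hc
      have hzero : ∀ j, Amat xF xW uF π i j * b j = 0 := by
        intro j
        by_cases hbj : b j = 0
        · simp [hbj]
        · have h2 := hc j hbj
          have h3 := hAnn i j
          have : Amat xF xW uF π i j = 0 := le_antisymm h2 h3
          simp [this]
      have h := hAb i
      rw [Finset.sum_eq_zero (fun j _ => hzero j)] at h
      cases i with
      | inl f' =>
        rw [show Sum.elim π.capF π.capW (Sum.inl f') = π.capF f' from rfl, hcapF1] at h
        norm_num at h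
      | inr w =>
        rw [show Sum.elim π.capF π.capW (Sum.inr w) = π.capW w from rfl, hcapW1] at h
        norm_num at h
    obtain ⟨j, hbj, hAij⟩ := hApos
    have hjB := hsupp j hbj
    cases j with
    | inl j' =>
      have hij : i = j' := by
        by_contra h
        have : (0:ℝ) < if i = j' then 1 else 0 := hAij
        simp [h] at this
      subst hij
      exact ⟨Sum.inl i, hjB, by rw [hdiag]; exact hposC i (Sum.inr sZ) (by simp)⟩
    | inr Y =>
      have hpart : Participates xF xW i Y.1 := by
        cases i with
        | inl f' =>
          have hA' : (0:ℝ) < π.piF Y.1 f' := hAij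
          rw [hcF] at hA'
          show (restrF xF Y.1 f').Nonempty
          by_contra h
          simp [h] at hA'
        | inr w =>
          have hA' : (0:ℝ) < π.piW Y.1 w := hAij
          rw [hcW] at hA'
          show (restrW xW Y.1 w).Nonempty
          by_contra h
          simp [h] at hA'
      by_cases hpZ : Participates xF xW i Z
      · by_cases hslack : b (Sum.inl i) = 0
        · have htY : 0 < t Y.1 := by
            rw [htb Y]; exact lt_of_le_of_ne (hb0 _) (Ne.symm hbj)
          cases i with
          | inl f' =>
            have hf' : f' = f := by
              obtain ⟨x, hx⟩ := (show (restrF xF Z f').Nonempty from hpZ)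
              have hx' := Finset.mem_filter.1 hx
              rw [← hx'.2]
              exact hZacc.1.1 x hx'.1
            subst hf'
            have htight : (∑ Y' : Finset X, t Y' * π.piF Y' f') = π.capF f' := by
              have := hF f'
              rw [hslack] at this
              linarith
            have hYacc : AccA xF xW uF f' Y.1 := by
              obtain ⟨f0, hf0⟩ := Y.2
              obtain ⟨x, hx⟩ := (show (restrF xF Y.1 f').Nonempty from hpart)
              have hx' := Finset.mem_filter.1 hx
              have hf0' : f0 = f' := by
                rw [← hx'.2]
                exact (hf0.1.1 x hx'.1).symm
              exact hf0' ▸ hf0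
            set S := Finset.univ.filter
              (fun Y' : {Y : Finset X // AccF xF xW uF Y} =>
                0 < t Y'.1 ∧ AccA xF xW uF f' Y'.1) with hS
            have hSne : S.Nonempty := ⟨Y, by simp [hS, htY, hYacc]⟩
            obtain ⟨Y0, hY0S, hY0min⟩ :=
              Finset.exists_min_image S (fun Y' => uF f' Y'.1) hSne
            have hY0 := (Finset.mem_filter.1 hY0S).2
            have hworst : WorstFC xF xW uF π t f' Y0.1 := by
              left
              refine ⟨htight, hY0.1, hY0.2, ?_⟩
              intro Y' htY' hY'acc
              exact hY0min ⟨Y', f', hY'acc⟩ (by simp [hS, htY', hY'acc])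
            have hlt := hfb Y0.1 hworst
            have hCC := hCf f' sZ Y0 hZacc hY0.2 hlt
            refine ⟨Sum.inr Y0, hsupp _ ?_, hCC⟩
            rw [← htb Y0]
            exact (ne_of_gt hY0.1)
          | inr w =>
            have hwZ : (restrW xW Z w).Nonempty := hpZ
            have htight : (∑ Y' : Finset X, t Y' * π.piW Y' w) = π.capW w := by
              have := hW w
              rw [hslack] at this
              linarith
            have hYw : (restrW xW Y.1 w).Nonempty := hpart
            set S := Finset.univ.filter
              (fun Y' : {Y : Finset X // AccF xF xW uF Y} =>
                0 < t Y'.1 ∧ (restrW xW Y'.1 w).Nonempty) with hS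
            have hSne : S.Nonempty := ⟨Y, by simp [hS, htY, hYw]⟩
            obtain ⟨Y0, hY0S, hY0min⟩ :=
              Finset.exists_min_image S (fun Y' => C (Sum.inr w) (Sum.inr Y')) hSne
            have hY0 := (Finset.mem_filter.1 hY0S).2
            have hworst : WorstWC xF xW uF uW π t w Y0.1 := by
              left
              refine ⟨htight, hY0.1, hY0.2, ?_⟩
              intro Y' htY' hY'w
              have hY'F : AccF xF xW uF Y' := htacc Y' htY'
              by_cases he : Y' = Y0.1
              · exact Or.inr he
              · rcases wB_total' xF xW uF uW hstrict w Y' Y0.1 hY'F Y0.2 hY'w he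
                  with h | h
                · exact Or.inl h
                · exfalso
                  have hCC := hCw w Y0 ⟨Y', hY'F⟩ hY0.2 hY'w h
                  have hmin := hY0min ⟨Y', hY'F⟩ (by simp [hS, htY', hY'w])
                  linarith
            have hblk := hwb w hwZ Y0.1 hworst
            have hCC := hCw w sZ Y0 hwZ hY0.2 hblk
            refine ⟨Sum.inr Y0, hsupp _ ?_, hCC⟩
            rw [← htb Y0]
            exact (ne_of_gt hY0.1)
        · refine ⟨Sum.inl i, hsupp _ hslack, ?_⟩
          rw [hdiag]
          exact hposC i (Sum.inr sZ) (by simp)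
      · exact ⟨Sum.inr Y, hjB, hbig2 i sZ hpZ i Y hpart⟩
  obtain ⟨j, hjB, hj⟩ := key
  exact absurd hi (not_le.2 ((Finset.inf'_le _ hjB).trans_lt hj))
end
end

section
/- Given any row i of the matrix C (as constructed for Scarf's algorithm), the set of n columns having the largest n entries in row i forms an ordinal basis of C, and this basis consists of the n−1 columns from N other than column i, together with exactly one column from 𝒜̄^F. -/
open Finset
open scoped Classical

noncomputable section

/-- `B` is an ordinal basis of `C`: a set of `|R|` columns such that, with
`u i` the minimum of row `i` over `B`, every column `s` has some row `i` with
`u i ≥ C i s`. -/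
def OrdBasisSet {R κ : Type} [Fintype R] [Fintype κ] (C : Matrix R κ ℝ)
    (B : Finset κ) : Prop :=
  B.card = Fintype.card R ∧
  ∃ hB : B.Nonempty, ∀ s : κ, ∃ i : R, B.inf' hB (fun j => C i j) ≥ C i s

/-- For the matrix `C` of Scarf's construction (rows = agents `R`, columns = agents ⊕
acceptable assignments `A`): given any row `i`, the set of `|R|` columns carrying the
largest `|R|` entries of row `i` is an ordinal basis of `C`, and it consists of the
`|R| − 1` agent columns other than `i` together with exactly one assignment column. -/
theorem stmt13 {R A : Type} [Fintype R] [DecidableEq R] [Fintype A] [DecidableEq A]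
    [Nonempty R] [Nonempty A]
    (C : Matrix R (R ⊕ A) ℝ) (memb : R → A → Prop)
    (hdiag : ∀ i, C i (Sum.inl i) = 0)
    (hpos : ∀ i j, j ≠ Sum.inl i → 0 < C i j)
    (hrow : ∀ i, Function.Injective (C i))
    (hbig1 : ∀ i j, i ≠ j → ∀ (i' : R) (Y : A), C i (Sum.inl j) > C i' (Sum.inr Y))
    (hbig2 : ∀ k Y, ¬memb k Y → ∀ i Y', memb i Y' → C k (Sum.inr Y) > C i (Sum.inr Y'))
    (i : R) (B : Finset (R ⊕ A))
    (hcard : B.card = Fintype.card R)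
    (hlargest : ∀ j ∈ B, ∀ j' ∉ B, C i j > C i j') :
    OrdBasisSet C B ∧
    ∃ Y : A, B = ((Finset.univ.erase i).image Sum.inl) ∪ {Sum.inr Y} := by
  have hRpos : 0 < Fintype.card R := Fintype.card_pos
  -- every agent column other than i belongs to B
  have hsub : ∀ j : R, j ≠ i → Sum.inl j ∈ B := by
    intro j hj
    by_contra hjB
    have hBsub : B ⊆ ((Finset.univ.erase i).erase j).image Sum.inl := by
      intro b hb
      have hgt := hlargest b hb (Sum.inl j) hjB
      rcases b with k | Y
      case inl =>
        simp only [Finset.mem_image, Finset.mem_erase, Finset.mem_univ, and_true]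
        refine ⟨k, ⟨?_, ?_⟩, rfl⟩
        · rintro rfl; exact hjB hb
        · intro hk
          rw [hk, hdiag] at hgt
          have h0 := hpos i (Sum.inl j) (by simp [hj])
          linarith
      case inr =>
        have := hbig1 i j (Ne.symm hj) i Y
        linarith
    have hc := Finset.card_le_card hBsub
    rw [Finset.card_image_of_injective _ Sum.inl_injective,
      Finset.card_erase_of_mem (by simp [hj]),
      Finset.card_erase_of_mem (Finset.mem_univ i), Finset.card_univ] at hc
    omega
  -- the diagonal column is not in B
  have hiB : Sum.inl i ∉ B := by
    intro hiB
    have hall : (Finset.univ.image Sum.inl : Finset (R ⊕ A)) ⊆ B := by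
      intro b hb
      simp only [Finset.mem_image, Finset.mem_univ, true_and] at hb
      obtain ⟨k, rfl⟩ := hb
      by_cases hk : k = i
      · subst hk; exact hiB
      · exact hsub k hk
    have heq : (Finset.univ.image Sum.inl : Finset (R ⊕ A)) = B :=
      Finset.eq_of_subset_of_card_le hall
        (by rw [Finset.card_image_of_injective _ Sum.inl_injective,
          Finset.card_univ, hcard])
    obtain ⟨Y⟩ := ‹Nonempty A›
    have hY : Sum.inr Y ∉ B := by rw [← heq]; simp
    have h1 := hlargest (Sum.inl i) hiB (Sum.inr Y) hY
    have h2 := hpos i (Sum.inr Y) (by simp)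
    rw [hdiag] at h1
    linarith
  set S : Finset (R ⊕ A) := (Finset.univ.erase i).image Sum.inl with hS
  have hSB : S ⊆ B := by
    intro b hb
    rw [hS] at hb
    simp only [Finset.mem_image, Finset.mem_erase, Finset.mem_univ, and_true] at hb
    obtain ⟨k, hk, rfl⟩ := hb
    exact hsub k hk
  have hScard : S.card = Fintype.card R - 1 := by
    rw [hS, Finset.card_image_of_injective _ Sum.inl_injective,
      Finset.card_erase_of_mem (Finset.mem_univ i), Finset.card_univ]
  have hd : (B \ S).card = 1 := by
    rw [Finset.card_sdiff_of_subset hSB, hcard, hScard]; omega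
  obtain ⟨b, hb⟩ := Finset.card_eq_one.mp hd
  obtain ⟨Y, rfl⟩ : ∃ Y, b = Sum.inr Y := by
    rcases b with k | Y
    case inl =>
      have hmem : Sum.inl k ∈ B \ S := hb ▸ Finset.mem_singleton_self _
      have h1 := Finset.mem_sdiff.mp hmem
      have hk : k = i := by
        by_contra hk
        exact h1.2 (by rw [hS]; simp [hk])
      exact absurd (hk ▸ h1.1) hiB
    case inr => exact ⟨Y, rfl⟩
  have hBeq : B = S ∪ {Sum.inr Y} := by
    rw [← hb]
    exact (Finset.union_sdiff_of_subset hSB).symm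
  have hBne : B.Nonempty := Finset.card_pos.mp (by rw [hcard]; exact hRpos)
  have hYB : Sum.inr Y ∈ B := by rw [hBeq]; simp
  refine ⟨⟨hcard, hBne, ?_⟩, Y, hBeq⟩
  intro s
  rcases s with j | Y'
  case inl =>
    by_cases hj : j = i
    · refine ⟨i, ?_⟩
      rw [ge_iff_le, hj, hdiag]
      apply Finset.le_inf'
      intro b hbB
      have hne : b ≠ Sum.inl i := by rintro rfl; exact hiB hbB
      exact le_of_lt (hpos i b hne)
    · refine ⟨j, ?_⟩
      rw [ge_iff_le, hdiag]
      apply Finset.le_inf'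
      intro b hbB
      by_cases hbj : b = Sum.inl j
      · subst hbj; exact le_of_eq (hdiag j).symm
      · exact le_of_lt (hpos j b hbj)
  case inr =>
    refine ⟨i, ?_⟩
    rw [ge_iff_le]
    apply Finset.le_inf'
    intro b hbB
    rw [hBeq] at hbB
    simp only [Finset.mem_union, Finset.mem_singleton] at hbB
    rcases hbB with hbS | rfl
    · rw [hS] at hbS
      simp only [Finset.mem_image, Finset.mem_erase, Finset.mem_univ, and_true] at hbS
      obtain ⟨k, hk, rfl⟩ := hbS
      exact le_of_lt (hbig1 i k (Ne.symm hk) i Y')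
    · by_cases hYY : Y' = Y
      · subst hYY; exact le_refl _
      · have hnot : Sum.inr Y' ∉ B := by
          rw [hBeq]
          simp only [Finset.mem_union, Finset.mem_singleton, hS]
          push_neg
          exact ⟨by simp, by simp [hYY]⟩
        exact le_of_lt (hlargest (Sum.inr Y) hYB (Sum.inr Y') hnot)
end
end

section
/- Every ordinal basis of the matrix C has the property that each of its columns contains exactly one row minimizer of the basis. -/
open Finset
open scoped Classical

noncomputable section

/-- In an ordinal basis of a matrix with pairwise distinct entries in each row, each
column of the basis contains exactly one row minimizer of the basis. -/
theorem stmt14 {n : ℕ} {ι : Type} [Fintype ι] (hn : 0 < n)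
    (C : Matrix (Fin n) ι ℝ)
    (hrow : ∀ i, Function.Injective fun j => C i j)
    (B : Fin n → ι) (hB : Function.Injective B)
    (hord : ∀ s : ι, ∃ i : Fin n,
      (Finset.univ.inf' ⟨⟨0, hn⟩, Finset.mem_univ _⟩ fun m => C i (B m)) ≥ C i s) :
    ∀ m : Fin n, ∃! i : Fin n,
      C i (B m) = Finset.univ.inf' ⟨⟨0, hn⟩, Finset.mem_univ _⟩ fun m' => C i (B m') := by
  set ne : (Finset.univ : Finset (Fin n)).Nonempty := ⟨⟨0, hn⟩, Finset.mem_univ _⟩ with hne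
  set u : Fin n → ℝ := fun i => Finset.univ.inf' ne fun m' => C i (B m') with hu
  -- for each row choose the (unique) basis column where the min is attained
  have hex : ∀ i : Fin n, ∃ m : Fin n, C i (B m) = u i := by
    intro i
    obtain ⟨m, _, hm⟩ := Finset.exists_mem_eq_inf' ne fun m' => C i (B m')
    exact ⟨m, hm.symm⟩
  choose g hg using hex
  have hchar : ∀ i m, C i (B m) = u i → m = g i := by
    intro i m hm
    have : C i (B m) = C i (B (g i)) := by rw [hm, hg i]
    exact hB (hrow i this)
  -- g is surjective
  have hsurj : Function.Surjective g := by
    intro m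
    obtain ⟨i, hi⟩ := hord (B m)
    have hle : u i ≤ C i (B m) := Finset.inf'_le _ (Finset.mem_univ m)
    have heq : C i (B m) = u i := le_antisymm hi hle
    exact ⟨i, (hchar i m heq).symm⟩
  have hinj : Function.Injective g := Finite.injective_iff_surjective.mpr hsurj
  intro m
  obtain ⟨i, hi⟩ := hsurj m
  refine ⟨i, ?_, ?_⟩
  · rw [← hi]; exact hg i
  · intro j hj
    exact hinj (by rw [← hchar j m hj, hi])
end
end
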